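/- For all natural numbers m and n with 2m ≥ n, one has σ_{m,n} = (2·4^m·(2m−n)!)/(m!·(4m+1)!!)·p_n(m). -/

import Mathlib

open Polynomial Finset

/-- The Pochhammer symbol (rising factorial) `(α)_k`. -/
noncomputable def poch (α : ℝ) (k : ℕ) : ℝ := ∏ i ∈ Finset.range k, (α + i)

/-- The quantity `σ_{m,n}`. -/
noncomputable def sigma (m n : ℕ) : ℝ :=
  ∑ k ∈ Finset.range (m + 1),
    (m.choose k : ℝ) * (k : ℝ) ^ n * (-1) ^ k / poch ((k : ℝ) + 1 / 2) (m + 1)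

/-- The Stirling numbers of the second kind. -/
noncomputable def stirling2 (n k : ℕ) : ℝ :=
  (1 / (Nat.factorial k) : ℝ) *
    ∑ j ∈ Finset.range (k + 1), (k.choose j : ℝ) * (-1) ^ (k - j) * (j : ℝ) ^ n

/-- The polynomial `p_n(m)`. -/
noncomputable def pPoly (n : ℕ) (m : ℝ) : ℝ :=
  ∑ k ∈ Finset.range (n + 1),
    stirling2 n k * poch (-m) k * poch (1 / 2) k * poch (2 * m - n + 1) (n - k)

/-- The odd double factorial `(2j+1)!! = 1·3·5⋯(2j+1)`. -/
noncomputable def oddDF (j : ℕ) : ℝ := ∏ i ∈ Finset.range (j + 1), (2 * (i : ℝ) + 1)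

/-!
Newton's forward-difference formula gives `k ^ n = ∑ⱼ C(k,j) j! S(n,j)`; exchanging sums reduces
`σ_{m,n}` to the alternating sums `∑ₖ C(m,k) C(k,j) (-1)^k / (k+1/2)_{m+1}`. Up to the factor
`C(m,j) (-1)^j`, these are `(m-j)`-th forward differences of `x ↦ 1 / (x)_{m+1}`, and the `M`-th
forward difference of that function is `(-1)^M (m+1)_M / (x)_{m+M+1}`. So the `j`-th term of
`σ_{m,n}` is `S(n,j) (-m)_j (1/2)_j (2m-j)! / (m! (1/2)_{2m+1})`. As `(2m-j)! = (2m-n)! (2m-n+1)_{n-j}`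
and `(4m+1)!! = 2^{2m+1} (1/2)_{2m+1}`, this is also the `j`-th term of the right-hand side, and
the terms with `j > m` or `j > n` vanish.
-/

open scoped Nat fwdDiff

lemma poch_succ (α : ℝ) (k : ℕ) : poch α (k + 1) = poch α k * (α + k) :=
  prod_range_succ _ _

lemma poch_succ' (α : ℝ) (k : ℕ) : poch α (k + 1) = α * poch (α + 1) k := by
  simp only [poch, prod_range_succ', Nat.cast_succ, Nat.cast_zero, add_zero, mul_comm, add_assoc,
    add_comm (1 : ℝ)]

lemma poch_add (α : ℝ) (p q : ℕ) : poch α (p + q) = poch α p * poch (α + p) q := by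
  simp only [poch, prod_range_add, Nat.cast_add, add_assoc]

lemma poch_pos {α : ℝ} (hα : 0 < α) (k : ℕ) : 0 < poch α k :=
  prod_pos fun _ _ => by positivity

lemma factorial_mul_poch (q r : ℕ) : (q ! : ℝ) * poch (q + 1) r = (q + r)! := by
  induction r with
  | zero => simp [poch]
  | succ r ih =>
    rw [poch_succ, ← mul_assoc, ih, ← add_assoc, Nat.factorial_succ]
    push_cast; ring

lemma poch_neg_natCast (m j : ℕ) : poch (-m) j = (-1) ^ j * j ! * m.choose j := by
  have h : poch (-m) j = ∏ i ∈ range j, (-1) * ((m : ℝ) - i) :=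
    prod_congr rfl fun _ _ => by ring
  rw [h, prod_mul_distrib, prod_const, card_range, ← descPochhammer_eval_eq_prod_range,
    descPochhammer_eval_eq_descFactorial, Nat.descFactorial_eq_factorial_mul_choose]
  push_cast; ring

lemma oddDF_eq_two_pow_mul_poch (j : ℕ) : oddDF j = 2 ^ (j + 1) * poch (1 / 2) (j + 1) := by
  have h : oddDF j = ∏ i ∈ range (j + 1), 2 * ((1 / 2 : ℝ) + i) :=
    prod_congr rfl fun _ _ => by ring
  rw [h, prod_mul_distrib, prod_const, card_range, poch]

lemma factorial_mul_stirling2 (n j : ℕ) :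
    (j ! : ℝ) * stirling2 n j = (Δ_[1])^[j] (fun x : ℝ => x ^ n) 0 := by
  rw [fwdDiff_iter_eq_sum_shift, stirling2, ← mul_assoc, mul_one_div_cancel (by positivity),
    one_mul]
  refine sum_congr rfl fun i _ => ?_
  simp only [zsmul_eq_mul, nsmul_eq_mul, zero_add, mul_one]
  push_cast; ring

lemma stirling2_eq_zero_of_lt {n j : ℕ} (h : n < j) : stirling2 n j = 0 := by
  have := factorial_mul_stirling2 n j
  rw [fwdDiff_iter_pow_eq_zero_of_lt h] at this
  simpa [Nat.factorial_ne_zero] using this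

lemma natCast_pow_eq_sum_stirling2 (n k : ℕ) :
    (k : ℝ) ^ n = ∑ j ∈ range (k + 1), k.choose j * j ! * stirling2 n j := by
  have := shift_eq_sum_fwdDiff_iter 1 (fun x : ℝ => x ^ n) k 0
  simp only [zero_add, nsmul_eq_mul, mul_one] at this
  rw [this]
  refine sum_congr rfl fun j _ => ?_
  rw [mul_assoc, factorial_mul_stirling2]

lemma fwdDiff_inv_poch {a : ℝ} (ha : 0 < a) (m : ℕ) :
    Δ_[1] (fun i : ℕ => (poch (a + i) (m + 1))⁻¹) =
      (-(m + 1 : ℝ)) • fun i : ℕ => (poch (a + i) (m + 1 + 1))⁻¹ := by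
  ext i
  have hpos : 0 < poch (a + (i + 1 : ℕ)) m := poch_pos (by positivity) m
  have hlo : poch (a + i) (m + 1) = (a + i) * poch (a + (i + 1 : ℕ)) m := by
    rw [poch_succ', Nat.cast_succ, add_assoc]
  have hhi : poch (a + (i + 1 : ℕ)) (m + 1) = poch (a + (i + 1 : ℕ)) m * (a + i + 1 + m) := by
    rw [poch_succ, Nat.cast_succ]; ring
  have hboth : poch (a + i) (m + 1 + 1) = (a + i) * poch (a + (i + 1 : ℕ)) m * (a + i + 1 + m) := by
    rw [poch_succ, hlo]; push_cast; ring
  simp only [fwdDiff, Pi.smul_apply, smul_eq_mul, hlo, hhi, hboth]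
  have hai : (0 : ℝ) < a + i := by positivity
  field_simp
  ring

lemma fwdDiff_iter_inv_poch {a : ℝ} (ha : 0 < a) (M m : ℕ) :
    (Δ_[1])^[M] (fun i : ℕ => (poch (a + i) (m + 1))⁻¹) =
      ((-1) ^ M * poch (m + 1) M) • fun i : ℕ => (poch (a + i) (m + M + 1))⁻¹ := by
  induction M generalizing m with
  | zero => simp [poch]
  | succ M ih =>
    rw [Function.iterate_succ_apply, fwdDiff_inv_poch ha, fwdDiff_iter_const_smul, ih, smul_smul,
      poch_succ', show m + 1 + M + 1 = m + (M + 1) + 1 by omega]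
    congr 1
    push_cast; ring

lemma sum_choose_mul_neg_one_pow_div_poch {a : ℝ} (ha : 0 < a) (M m : ℕ) :
    ∑ i ∈ range (M + 1), (M.choose i : ℝ) * (-1) ^ i / poch (a + i) (m + 1) =
      poch (m + 1) M / poch a (m + M + 1) := by
  have h := congrFun (fwdDiff_iter_inv_poch ha M m) 0
  rw [fwdDiff_iter_eq_sum_shift] at h
  simp only [Pi.smul_apply, smul_eq_mul, zero_add, Nat.cast_zero, add_zero, zsmul_eq_mul,
    mul_one] at h
  calc ∑ i ∈ range (M + 1), (M.choose i : ℝ) * (-1) ^ i / poch (a + i) (m + 1)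
      = (-1) ^ M * ∑ i ∈ range (M + 1), (((-1) ^ (M - i) * M.choose i : ℤ) : ℝ) *
          (poch (a + i) (m + 1))⁻¹ := by
        rw [mul_sum]
        refine sum_congr rfl fun i _ => ?_
        have hsign : ((-1 : ℝ)) ^ M * (-1) ^ (M - i) = (-1) ^ i := by
          rw [← pow_add, show M + (M - i) = 2 * (M - i) + i by grind, pow_add, pow_mul]
          norm_num
        push_cast
        rw [← hsign]
        ring
    _ = poch (m + 1) M / poch a (m + M + 1) := by
        rw [h, ← mul_assoc, ← mul_assoc, ← pow_add, ← two_mul, pow_mul]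
        norm_num [div_eq_mul_inv]

lemma sum_choose_mul_choose_div_poch {a : ℝ} (ha : 0 < a) {m j : ℕ} (hj : j ≤ m) :
    ∑ k ∈ range (m + 1), (m.choose k : ℝ) * k.choose j * (-1) ^ k / poch (k + a) (m + 1) =
      m.choose j * (-1) ^ j * poch (m + 1) (m - j) / poch (j + a) (2 * m - j + 1) := by
  rw [show range (m + 1) = range (j + (m - j + 1)) by congr 1; omega, sum_range_add,
    sum_eq_zero fun k hk => by simp [Nat.choose_eq_zero_of_lt (mem_range.mp hk)], zero_add]
  have hterm : ∀ i ∈ range (m - j + 1),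
      (m.choose (j + i) : ℝ) * (j + i).choose j * (-1) ^ (j + i) / poch ((j + i : ℕ) + a) (m + 1)
        = m.choose j * (-1) ^ j *
          ((m - j).choose i * (-1) ^ i / poch ((j + a) + i) (m + 1)) := by
    intro i _
    have hchoose : (m.choose (j + i) : ℝ) * (j + i).choose j = m.choose j * (m - j).choose i := by
      exact_mod_cast (by simpa using Nat.choose_mul (n := m) (Nat.le_add_right j i))
    rw [pow_add, hchoose, show ((j + i : ℕ) : ℝ) + a = j + a + i by push_cast; ring]
    ring
  rw [sum_congr rfl hterm, ← mul_sum, sum_choose_mul_neg_one_pow_div_poch (by positivity),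
    show m + (m - j) + 1 = 2 * m - j + 1 by omega]
  ring

noncomputable def sigmaSummand (m n j : ℕ) : ℝ :=
  stirling2 n j * poch (-m) j * poch (1 / 2) j * (2 * m - j)! / (m ! * poch (1 / 2) (2 * m + 1))

lemma factorial_mul_stirling2_mul_sum_eq_sigmaSummand {m j : ℕ} (n : ℕ) (hj : j ≤ m) :
    j ! * stirling2 n j * ∑ k ∈ range (m + 1),
        (m.choose k : ℝ) * k.choose j * (-1) ^ k / poch (k + 1 / 2) (m + 1) =
      sigmaSummand m n j := by
  have hfact : (m ! : ℝ) * poch (m + 1) (m - j) = (2 * m - j)! := by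
    rw [factorial_mul_poch, show m + (m - j) = 2 * m - j by omega]
  have hsplit : poch (1 / 2) (2 * m + 1) = poch (1 / 2) j * poch (j + 1 / 2) (2 * m - j + 1) := by
    rw [← add_comm (1 / 2 : ℝ), ← poch_add, show j + (2 * m - j + 1) = 2 * m + 1 by omega]
  have h1 : 0 < poch (1 / 2) j := poch_pos (by norm_num) j
  have h2 : 0 < poch (j + 1 / 2) (2 * m - j + 1) := poch_pos (by positivity) _
  rw [sum_choose_mul_choose_div_poch (by norm_num) hj, sigmaSummand, poch_neg_natCast, hsplit,
    ← hfact]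
  field_simp

lemma sigma_eq_sum_sigmaSummand (m n : ℕ) :
    sigma m n = ∑ j ∈ range (m + 1), sigmaSummand m n j := by
  have hpow : ∀ k ∈ range (m + 1),
      (k : ℝ) ^ n = ∑ j ∈ range (m + 1), k.choose j * j ! * stirling2 n j := by
    intro k hk
    rw [natCast_pow_eq_sum_stirling2]
    refine sum_subset (range_subset_range.mpr (by simpa using hk)) fun j _ hj => ?_
    simp [Nat.choose_eq_zero_of_lt (by simpa using hj : k < j)]
  calc sigma m n
      = ∑ k ∈ range (m + 1), ∑ j ∈ range (m + 1), j ! * stirling2 n j *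
          ((m.choose k : ℝ) * k.choose j * (-1) ^ k / poch (k + 1 / 2) (m + 1)) := by
        refine sum_congr rfl fun k hk => ?_
        rw [hpow k hk, mul_sum, sum_mul, sum_div]
        exact sum_congr rfl fun j _ => by ring
    _ = ∑ j ∈ range (m + 1), sigmaSummand m n j := by
        rw [sum_comm]
        refine sum_congr rfl fun j hj => ?_
        rw [← mul_sum, factorial_mul_stirling2_mul_sum_eq_sigmaSummand n (mem_range_succ_iff.mp hj)]

lemma sigmaSummand_eq_zero_of_lt_left {m n j : ℕ} (h : m < j) : sigmaSummand m n j = 0 := by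
  simp [sigmaSummand, poch_neg_natCast, Nat.choose_eq_zero_of_lt h]

lemma sigmaSummand_eq_zero_of_lt_right {m n j : ℕ} (h : n < j) : sigmaSummand m n j = 0 := by
  simp [sigmaSummand, stirling2_eq_zero_of_lt h]

lemma sum_sigmaSummand_range_succ_eq (m n : ℕ) :
    ∑ j ∈ range (m + 1), sigmaSummand m n j = ∑ j ∈ range (n + 1), sigmaSummand m n j := by
  have hsub : ∀ {p}, p ≤ m + n → range (p + 1) ⊆ range (m + n + 1) := fun hp =>
    range_subset_range.mpr (by omega)
  rw [sum_subset (hsub (Nat.le_add_right m n)) fun j _ hj =>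
      sigmaSummand_eq_zero_of_lt_left (by simp at hj; omega),
    sum_subset (hsub (Nat.le_add_left n m)) fun j _ hj =>
      sigmaSummand_eq_zero_of_lt_right (by simp at hj; omega)]

lemma mul_pPoly_eq_sum_sigmaSummand {m n : ℕ} (h : n ≤ 2 * m) :
    2 * 4 ^ m * ((2 * m - n)! : ℝ) / (m ! * oddDF (2 * m)) * pPoly n m =
      ∑ j ∈ range (n + 1), sigmaSummand m n j := by
  rw [pPoly, mul_sum]
  refine sum_congr rfl fun j hj => ?_
  have hfact : ((2 * m - n)! : ℝ) * poch (2 * m - n + 1) (n - j) = (2 * m - j)! := by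
    have := factorial_mul_poch (2 * m - n) (n - j)
    rwa [Nat.cast_sub h, Nat.cast_mul, Nat.cast_two, show 2 * m - n + (n - j) = 2 * m - j by
      have := mem_range_succ_iff.mp hj; omega] at this
  have hpow : (2 : ℝ) * 4 ^ m = 2 ^ (2 * m + 1) := by
    rw [pow_succ, pow_mul]; norm_num; ring
  have hpos : 0 < poch (1 / 2) (2 * m + 1) := poch_pos (by norm_num) _
  rw [sigmaSummand, oddDF_eq_two_pow_mul_poch, hpow, ← hfact]
  field_simp

theorem stmt5 (m n : ℕ) (h : 2 * m ≥ n) :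
    sigma m n =
      2 * 4 ^ m * (Nat.factorial (2 * m - n)) / ((Nat.factorial m) * oddDF (2 * m)) *
        pPoly n (m : ℝ) := by
  rw [sigma_eq_sum_sigmaSummand, sum_sigmaSummand_range_succ_eq, mul_pPoly_eq_sum_sigmaSummand h]
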